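/- arXiv:2406.07905 — 2 statements merged into one kernel-verified Lean document; each statement's English description precedes it below -/
import Mathlib

section
/- Let k be a non-negative integer and n a positive integer. For each 1 ≤ i ≤ k+1 let pᵢ be a prime with pᵢ ≡ 3 (mod 4). Then for any integer j with j ≢ 0 (mod p_{k+1}), one has B₄( p₁²p₂²⋯p_k² p_{k+1}² n + (p₁²p₂²⋯p_k² p_{k+1}(4j + p_{k+1}) − 1)/4 ) ≡ 0 (mod 4). (Note that since each pᵢ ≡ 3 (mod 4), the quantity p₁²p₂²⋯p_k² p_{k+1}(4j + p_{k+1}) − 1 is divisible by 4.) -/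
/-!
Modulo 2 the generating function `∏ (1 - q^(4n)) / (1 - q^n) = ∏ (1 + q^n + q^(2n) + q^(3n))` of
4-regular partitions is `∏ (1 + q^n)^3`, and Gauss's identity
`(∏ (1 + q^n))^2 · ∏ (1 - q^n) = ∑_j q^(j(j+1)/2)` turns it into `∑_j q^(j(j+1)/2)`: the number
`b₄(m)` of 4-regular partitions of `m` is odd exactly when `m` is triangular. Writing `b₄ = τ + 2g`
with `τ` the indicator of the triangular numbers, the cross terms of `B₄(N) = ∑_{a+b=N} b₄(a) b₄(b)`
pair up, so `B₄(N)` is congruent mod 4 to the number of ways of writing `N` as a sum of two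
triangular numbers. Such a way gives `4N + 1 = (i + j + 1)^2 + (i - j)^2`. For the `N` of the
theorem, `4N + 1 = (p₁ ⋯ p_k)^2 · p_{k+1} · (4 p_{k+1} n + 4j + p_{k+1})` has odd
`p_{k+1}`-adic valuation, so it is not a sum of two squares.

Gauss's identity follows from the q-binomial theorem for `∏_{i < 2n} (q^n + q^i)`: its Gaussian
binomial coefficients `[2n, n ± j]` agree with `∏ 1 / (1 - q^i)` in low degrees, and letting `n`
grow gives the identity coefficientwise.
-/

/-- Number of `l`-regular partitions of `n`: partitions none of whose parts is
divisible by `l`. -/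
def numRegularPartitions (l n : ℕ) : ℕ :=
  (Finset.univ.filter (fun p : Nat.Partition n => ∀ x ∈ p.parts, ¬ l ∣ x)).card

/-- `B l n`: the number of `l`-regular bipartitions of `n`, i.e. ordered pairs
`(λ, μ)` of `l`-regular partitions the sum of whose parts equals `n`. -/
def B (l n : ℕ) : ℕ :=
  ∑ ab ∈ Finset.HasAntidiagonal.antidiagonal n,
    numRegularPartitions l ab.1 * numRegularPartitions l ab.2

open PowerSeries Finset Nat.Partition PowerSeries.WithPiTopology

section Congruences
variable {R : Type*} [CommRing R]

theorem X_pow_smodEq_zero {d k : ℕ} (h : d ≤ k) :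
    (X : R⟦X⟧) ^ k ≡ 0 [SMOD Ideal.span {X ^ d}] :=
  SModEq.zero.2 (Ideal.mem_span_singleton.2 (pow_dvd_pow X h))

theorem SModEq.span_X_pow_mono {f g : R⟦X⟧} {d e : ℕ} (h : e ≤ d)
    (hfg : f ≡ g [SMOD Ideal.span {X ^ d}]) : f ≡ g [SMOD Ideal.span {X ^ e}] :=
  hfg.mono (Ideal.span_singleton_le_span_singleton.2 (pow_dvd_pow X h))

theorem SModEq.X_pow_mul {f g : R⟦X⟧} {c d : ℕ} (h : f ≡ g [SMOD Ideal.span {X ^ d}]) :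
    X ^ c * f ≡ X ^ c * g [SMOD Ideal.span {X ^ (c + d)}] := by
  rw [SModEq.sub_mem, Ideal.mem_span_singleton] at h ⊢
  rw [← mul_sub, pow_add]
  exact mul_dvd_mul_left _ h

theorem eq_of_forall_smodEq_span_X_pow {f g : R⟦X⟧}
    (h : ∀ m, f ≡ g [SMOD Ideal.span {X ^ (m + 1)}]) : f = g := by
  ext d
  have := X_pow_dvd_iff.1 (Ideal.mem_span_singleton.1 (SModEq.sub_mem.1 (h d))) d (lt_add_one d)
  rwa [map_sub, sub_eq_zero] at this

end Congruences

section Truncation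
variable {R : Type*} [CommRing R] [TopologicalSpace R] [T2Space R]

theorem isClosed_span_X_pow (d : ℕ) : IsClosed (Ideal.span {(X : R⟦X⟧) ^ d} : Set R⟦X⟧) := by
  have : (Ideal.span {(X : R⟦X⟧) ^ d} : Set R⟦X⟧) = ⋂ k ∈ range d, {f | coeff k f = 0} := by
    ext f
    simp [Ideal.mem_span_singleton, X_pow_dvd_iff]
  rw [this]
  exact isClosed_biInter fun k _ => isClosed_eq (continuous_coeff R k) continuous_const

variable [IsTopologicalRing R]

theorem HasProd.smodEq_prod_range {f : ℕ → R⟦X⟧} {a : R⟦X⟧} (h : HasProd f a) {n d : ℕ}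
    (hf : ∀ i, n ≤ i → f i ≡ 1 [SMOD Ideal.span {(X : R⟦X⟧) ^ d}]) :
    a ≡ ∏ i ∈ range n, f i [SMOD Ideal.span {(X : R⟦X⟧) ^ d}] := by
  set I := Ideal.span {(X : R⟦X⟧) ^ d}
  have hclosed : IsClosed {b : R⟦X⟧ | b - ∏ i ∈ range n, f i ∈ I} :=
    (isClosed_span_X_pow d).preimage (continuous_id.sub continuous_const)
  refine SModEq.sub_mem.2 (hclosed.mem_of_tendsto h
    (Filter.eventually_atTop.2 ⟨range n, fun s hs => ?_⟩))
  show _ ∈ I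
  rw [← SModEq.sub_mem, ← prod_sdiff hs]
  have : ∏ i ∈ s \ range n, f i ≡ ∏ i ∈ s \ range n, (1 : R⟦X⟧) [SMOD I] :=
    SModEq.prod fun i hi => hf i (by simpa using (mem_sdiff.1 hi).2)
  simpa using this.mul (SModEq.refl (∏ i ∈ range n, f i))

end Truncation

section GeneratingSeries
variable (R : Type*) [CommRing R]

noncomputable def partitionSeries : R⟦X⟧ := mk fun n => (Fintype.card n.Partition : R)

noncomputable def distinctsSeries : R⟦X⟧ := mk fun n => (#(distincts n) : R)

noncomputable def regularSeries (l : ℕ) : R⟦X⟧ := mk fun n => (numRegularPartitions l n : R)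

variable [TopologicalSpace R] [T2Space R]

theorem hasProd_distinctsSeries : HasProd (fun i => 1 + X ^ (i + 1)) (distinctsSeries R) := by
  have h := hasProd_powerSeriesMk_card_countRestricted R two_pos
  have e : ∀ i, ∑ j ∈ range 2, (X : R⟦X⟧) ^ ((i + 1) * j) = 1 + X ^ (i + 1) := fun i => by
    simp [sum_range_succ]
  simp only [countRestricted_two] at h
  exact funext e ▸ h

theorem hasProd_regularSeries {l : ℕ} (hl : 0 < l) :
    HasProd (fun i => ∑ j ∈ range l, X ^ ((i + 1) * j)) (regularSeries R l) := by
  have e : ∀ n, #(countRestricted n l) = numRegularPartitions l n := fun n =>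
    (card_restricted_eq_card_countRestricted n hl).symm
  simpa only [e, regularSeries] using hasProd_powerSeriesMk_card_countRestricted R hl

variable [IsTopologicalRing R]

theorem hasProd_partitionSeries :
    HasProd (fun i => ∑' j : ℕ, X ^ ((i + 1) * j)) (partitionSeries R) := by
  have e : ∀ n, #(restricted n fun _ => True) = Fintype.card n.Partition := fun n => by
    simp [restricted]
  simpa only [if_true, e, partitionSeries] using
    hasProd_powerSeriesMk_card_restricted R (fun _ => True)

theorem partitionSeries_mul_tprod_one_sub_X_pow :
    partitionSeries R * ∏' i, (1 - X ^ (i + 1)) = 1 := by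
  refine ((hasProd_partitionSeries R).mul (multipliable_one_sub_X_pow R).hasProd).unique ?_
  convert hasProd_one with i
  simp_rw [pow_mul]
  exact tsum_pow_mul_one_sub_of_constantCoeff_eq_zero (by simp)

variable {R}

theorem distinctsSeries_smodEq_prod (k : ℕ) :
    distinctsSeries R ≡ ∏ i ∈ range k, (1 + X ^ (i + 1)) [SMOD Ideal.span {X ^ (k + 1)}] :=
  (hasProd_distinctsSeries R).smodEq_prod_range fun i hi => by
    simpa using (SModEq.refl (1 : R⟦X⟧)).add (X_pow_smodEq_zero (by omega : k + 1 ≤ i + 1))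

theorem partitionSeries_mul_prod_smodEq_one (k : ℕ) :
    partitionSeries R * ∏ i ∈ range k, (1 - X ^ (i + 1)) ≡ 1
      [SMOD Ideal.span {X ^ (k + 1)}] := by
  have h : ∏' i, (1 - X ^ (i + 1)) ≡ ∏ i ∈ range k, (1 - X ^ (i + 1))
      [SMOD Ideal.span {(X : R⟦X⟧) ^ (k + 1)}] :=
    (multipliable_one_sub_X_pow R).hasProd.smodEq_prod_range fun i hi => by
      simpa using (SModEq.refl (1 : R⟦X⟧)).sub (X_pow_smodEq_zero (by omega : k + 1 ≤ i + 1))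
  simpa [partitionSeries_mul_tprod_one_sub_X_pow] using
    ((SModEq.refl (partitionSeries R)).mul h).symm

end GeneratingSeries

section Triangular

theorem choose_two_succ (j : ℕ) : (j + 1).choose 2 = j.choose 2 + j := by
  rw [Nat.choose_succ_succ', Nat.choose_one_right, add_comm]

theorem le_choose_two_succ (j : ℕ) : j ≤ (j + 1).choose 2 := by
  induction j with
  | zero => simp
  | succ j ih => rw [choose_two_succ]; omega

theorem strictMono_choose_two_succ : StrictMono fun j => (j + 1).choose 2 :=
  strictMono_nat_of_lt_succ fun j => by simp only [choose_two_succ]; omega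

def triangularNumbers : Set ℕ := Set.range fun j => (j + 1).choose 2

noncomputable def triangularSeries (R : Type*) [CommRing R] : R⟦X⟧ :=
  mk fun n => ((triangularNumbers.indicator 1 n : ℕ) : R)

theorem triangularSeries_smodEq_sum {R : Type*} [CommRing R] (k : ℕ) :
    triangularSeries R ≡ ∑ j ∈ range k, X ^ (j + 1).choose 2 [SMOD Ideal.span {X ^ k}] := by
  rw [SModEq.sub_mem, Ideal.mem_span_singleton, X_pow_dvd_iff]
  intro d hd
  rw [map_sub, sub_eq_zero, triangularSeries, coeff_mk, map_sum]
  simp only [coeff_X_pow]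
  by_cases ht : d ∈ triangularNumbers
  · obtain ⟨i, rfl⟩ := ht
    have hi : i < k := (le_choose_two_succ i).trans_lt hd
    rw [Set.indicator_of_mem (show _ ∈ triangularNumbers from ⟨i, rfl⟩),
      sum_eq_single_of_mem i (mem_range.2 hi)]
    · simp
    · exact fun j _ hji => if_neg fun h => hji (strictMono_choose_two_succ.injective h.symm)
  · rw [Set.indicator_of_notMem ht, sum_eq_zero fun j _ => if_neg fun h => ht ⟨j, h.symm⟩]
    simp

end Triangular

theorem sum_antidiagonal_succ_of_pascal {A : Type*} [CommRing A] (F : ℕ → ℕ → A) (y : A)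
    (z : ℕ → A) (hF : ∀ k a, F (k + 1) (a + 1) = y * F (k + 1) a + z (k + a + 1) * F k (a + 1))
    (hF0 : ∀ k, F (k + 1) 0 = z k * F k 0) (h0F : ∀ a, F 0 (a + 1) = y * F 0 a) (N : ℕ) :
    ∑ p ∈ antidiagonal (N + 1), F p.1 p.2 = (y + z N) * ∑ p ∈ antidiagonal N, F p.1 p.2 := by
  cases N with
  | zero =>
    simp [Nat.sum_antidiagonal_succ, hF0, h0F]
    ring
  | succ M =>
    have hA := Nat.sum_antidiagonal_succ (f := fun p => F p.1 p.2) (n := M)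
    have hB := Nat.sum_antidiagonal_succ' (f := fun p => F p.1 p.2) (n := M)
    have hmid : ∑ p ∈ antidiagonal (M + 1), F p.1 (p.2 + 1) =
        y * (F 0 (M + 1) + ∑ p ∈ antidiagonal M, F (p.1 + 1) p.2) +
          z (M + 1) * ∑ p ∈ antidiagonal M, F p.1 (p.2 + 1) := by
      rw [Nat.sum_antidiagonal_succ (f := fun p => F p.1 (p.2 + 1)), h0F, mul_add, mul_sum,
        mul_sum, add_assoc, ← sum_add_distrib]
      congr 1
      refine sum_congr rfl fun p hp => ?_
      rw [HasAntidiagonal.mem_antidiagonal] at hp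
      rw [hF, ← hp]
    rw [Nat.sum_antidiagonal_succ' (f := fun p => F p.1 p.2)]
    dsimp only at hA hB ⊢
    rw [hmid, hF0]
    linear_combination (-y) * hA - z (M + 1) * hB

theorem sum_antidiagonal_two_mul_succ {M : Type*} [AddCommMonoid M] (f : ℕ → ℕ → M) (m : ℕ) :
    ∑ p ∈ antidiagonal (2 * (m + 1)), f p.1 p.2 =
      ∑ j ∈ range (m + 2), f (m + 1 - j) (m + 1 + j) +
        ∑ j ∈ range (m + 1), f (m + 2 + j) (m - j) := by
  rw [Nat.sum_antidiagonal_eq_sum_range_succ f, Nat.succ_eq_add_one,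
    show 2 * (m + 1) + 1 = m + 2 + (m + 1) by ring, sum_range_add, ← sum_range_reflect]
  congr 1 <;> refine sum_congr rfl fun j hj => ?_ <;> rw [mem_range] at hj <;> congr 1 <;> omega

section QBinomial
variable {R : Type*} [CommRing R]

/-- `qBinom a b` is the Gaussian binomial coefficient `[a + b, b]` in the variable `X`. -/
noncomputable def qBinom : ℕ → ℕ → R⟦X⟧
  | 0, _ => 1
  | _ + 1, 0 => 1
  | a + 1, b + 1 => qBinom a (b + 1) + X ^ (a + 1) * qBinom (a + 1) b

@[simp] theorem qBinom_zero_left (b : ℕ) : (qBinom 0 b : R⟦X⟧) = 1 := by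
  rw [qBinom]

@[simp] theorem qBinom_zero_right (a : ℕ) : (qBinom a 0 : R⟦X⟧) = 1 := by
  cases a <;> rw [qBinom]

theorem qBinom_succ_succ (a b : ℕ) :
    (qBinom (a + 1) (b + 1) : R⟦X⟧) = qBinom a (b + 1) + X ^ (a + 1) * qBinom (a + 1) b := by
  rw [qBinom]

theorem qBinom_mul_prod_one_sub_X_pow (a b : ℕ) :
    (qBinom a b : R⟦X⟧) * ∏ i ∈ range b, (1 - X ^ (i + 1)) =
      ∏ i ∈ range b, (1 - X ^ (a + i + 1)) := by
  induction a generalizing b with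
  | zero => simp
  | succ a iha =>
    induction b with
    | zero => simp
    | succ b ihb =>
      have h := iha (b + 1)
      rw [prod_range_succ, prod_range_succ'] at h
      simp only [add_zero, show ∀ i, a + (i + 1) + 1 = a + 1 + i + 1 by omega] at h
      rw [qBinom_succ_succ, prod_range_succ, prod_range_succ]
      linear_combination h + X ^ (a + 1) * (1 - X ^ (b + 1)) * ihb

theorem prod_add_X_pow_eq_sum_antidiagonal (y : R⟦X⟧) (N : ℕ) :
    ∏ i ∈ range N, (y + X ^ i) =
      ∑ p ∈ antidiagonal N, X ^ p.1.choose 2 * qBinom p.2 p.1 * y ^ p.2 := by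
  induction N with
  | zero => simp
  | succ N ih =>
    rw [prod_range_succ, ih, mul_comm]
    refine (sum_antidiagonal_succ_of_pascal (fun k a => X ^ k.choose 2 * qBinom a k * y ^ a) y
      (X ^ ·) ?_ ?_ ?_ N).symm
    · intro k a
      simp only [qBinom_succ_succ, choose_two_succ]
      ring
    · intro k
      simp only [choose_two_succ, qBinom_zero_left]
      ring
    · intro a
      simp only [qBinom_zero_right]
      ring

theorem prod_X_pow_add_X_pow (m : ℕ) :
    ∏ i ∈ range (2 * (m + 1)), ((X : R⟦X⟧) ^ (m + 1) + X ^ i) =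
      X ^ ((m + 1).choose 2 + (m + 1) * (m + 1)) *
        (2 * (∏ i ∈ range (m + 1), (1 + X ^ (i + 1))) * ∏ i ∈ range m, (1 + X ^ (i + 1))) := by
  set n := m + 1
  have low : ∏ i ∈ range n, ((X : R⟦X⟧) ^ n + X ^ i) =
      X ^ n.choose 2 * ∏ i ∈ range n, (1 + X ^ (i + 1)) := by
    rw [← prod_range_reflect (fun i => 1 + (X : R⟦X⟧) ^ (i + 1)), Nat.choose_two_right,
      ← sum_range_id, ← prod_pow_eq_pow_sum, ← prod_mul_distrib]
    refine prod_congr rfl fun i hi => ?_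
    rw [mem_range] at hi
    rw [mul_add, mul_one, ← pow_add, add_comm, show i + (n - 1 - i + 1) = n by omega]
  have high : ∏ i ∈ range n, ((X : R⟦X⟧) ^ n + X ^ (n + i)) =
      X ^ (n * n) * (2 * ∏ i ∈ range m, (1 + X ^ (i + 1))) := by
    rw [prod_congr rfl fun i _ => show (X : R⟦X⟧) ^ n + X ^ (n + i) = X ^ n * (1 + X ^ i) by ring,
      prod_mul_distrib, prod_const, card_range, ← pow_mul, prod_range_succ']
    norm_num
    ring
  rw [two_mul n, prod_range_add, low, high, pow_add]
  ring

/-- A finite form of Jacobi's triple product at `z = 1`: the q-binomial theorem at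
`y = X ^ (m + 1)`, `N = 2 (m + 1)`, divided by `X ^ ((m + 1).choose 2 + (m + 1) ^ 2)`. -/
theorem two_mul_prod_one_add_X_pow_eq_sum_qBinom (m : ℕ) :
    (2 : R⟦X⟧) * (∏ i ∈ range (m + 1), (1 + X ^ (i + 1))) * ∏ i ∈ range m, (1 + X ^ (i + 1)) =
      ∑ j ∈ range (m + 2), X ^ (j + 1).choose 2 * qBinom (m + 1 + j) (m + 1 - j) +
        ∑ j ∈ range (m + 1), X ^ (j + 1).choose 2 * qBinom (m - j) (m + 2 + j) := by
  refine X_pow_mul_cancel (k := (m + 1).choose 2 + (m + 1) * (m + 1)) ?_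
  rw [← prod_X_pow_add_X_pow, prod_add_X_pow_eq_sum_antidiagonal,
    sum_antidiagonal_two_mul_succ
      (fun k a => (X : R⟦X⟧) ^ k.choose 2 * qBinom a k * (X ^ (m + 1)) ^ a),
    mul_add, mul_sum, mul_sum]
  congr 1 <;> refine sum_congr rfl fun j hj => ?_ <;> rw [mem_range] at hj
  · have e : (m + 1 - j).choose 2 + (m + 1) * (m + 1 + j) =
        (m + 1).choose 2 + (m + 1) * (m + 1) + (j + 1).choose 2 := by
      obtain ⟨r, hr⟩ : ∃ r, m + 1 = j + r := ⟨m + 1 - j, by omega⟩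
      rw [hr, Nat.add_sub_cancel_left]
      qify
      simp only [Nat.cast_choose_two]
      push_cast
      ring
    rw [← pow_mul, mul_right_comm, ← pow_add, e, pow_add]
    ring
  · have e : (m + 2 + j).choose 2 + (m + 1) * (m - j) =
        (m + 1).choose 2 + (m + 1) * (m + 1) + (j + 1).choose 2 := by
      obtain ⟨r, hr⟩ : ∃ r, m = j + r := ⟨m - j, by omega⟩
      rw [hr, Nat.add_sub_cancel_left]
      qify
      simp only [Nat.cast_choose_two]
      push_cast
      ring
    rw [← pow_mul, mul_right_comm, ← pow_add, e, pow_add]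
    ring

theorem qBinom_smodEq_partitionSeries [TopologicalSpace R] [T2Space R] [IsTopologicalRing R]
    (a b : ℕ) : qBinom a b ≡ partitionSeries R [SMOD Ideal.span {X ^ (min a b + 1)}] := by
  set E : R⟦X⟧ := ∏ i ∈ range b, (1 - X ^ (i + 1))
  have hE : IsUnit E := by
    rw [isUnit_iff_constantCoeff]
    simp [E, map_prod]
  have hq : qBinom a b * E ≡ 1 [SMOD Ideal.span {X ^ (a + 1)}] := by
    have h := SModEq.prod (s := range b) fun i _ =>
      (SModEq.refl (1 : R⟦X⟧)).sub (X_pow_smodEq_zero (by omega : a + 1 ≤ a + i + 1))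
    rw [qBinom_mul_prod_one_sub_X_pow]
    simpa using h
  have h : qBinom a b * E ≡ partitionSeries R * E [SMOD Ideal.span {X ^ (min a b + 1)}] :=
    (hq.span_X_pow_mono (by omega)).trans
      ((partitionSeries_mul_prod_smodEq_one b).span_X_pow_mono (by omega)).symm
  simpa [mul_assoc, hE.mul_val_inv] using h.mul (SModEq.refl (↑hE.unit⁻¹ : R⟦X⟧))

end QBinomial

section GaussIdentity

theorem two_mul_sq_distinctsSeries_smodEq (m : ℕ) :
    2 * distinctsSeries ℤ ^ 2 ≡ 2 * (triangularSeries ℤ * partitionSeries ℤ)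
      [SMOD Ideal.span {X ^ (m + 1)}] := by
  set P := partitionSeries ℤ
  have hD : 2 * distinctsSeries ℤ ^ 2 ≡ 2 * ((∏ i ∈ range (m + 1), (1 + X ^ (i + 1))) *
      ∏ i ∈ range m, (1 + X ^ (i + 1))) [SMOD Ideal.span {X ^ (m + 1)}] := by
    have h : distinctsSeries ℤ ≡ ∏ i ∈ range (m + 1), (1 + X ^ (i + 1))
        [SMOD Ideal.span {X ^ (m + 1)}] :=
      (distinctsSeries_smodEq_prod (m + 1)).span_X_pow_mono (Nat.le_succ _)
    rw [sq]
    exact (SModEq.refl 2).mul (h.mul (distinctsSeries_smodEq_prod m))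
  have hq : ∀ c a b, m + 1 ≤ c + (min a b + 1) →
      X ^ c * qBinom a b ≡ X ^ c * P [SMOD Ideal.span {X ^ (m + 1)}] :=
    fun c a b h => (qBinom_smodEq_partitionSeries a b).X_pow_mul.span_X_pow_mono h
  have hΘ : ∀ k, m + 1 ≤ k →
      (∑ j ∈ range k, X ^ (j + 1).choose 2) * P ≡ triangularSeries ℤ * P
        [SMOD Ideal.span {X ^ (m + 1)}] := fun k hk => by
    have h : triangularSeries ℤ ≡ ∑ j ∈ range k, X ^ (j + 1).choose 2
        [SMOD Ideal.span {X ^ (m + 1)}] :=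
      (triangularSeries_smodEq_sum k).span_X_pow_mono hk
    exact (h.mul (SModEq.refl P)).symm
  refine hD.trans ?_
  rw [← mul_assoc, two_mul_prod_one_add_X_pow_eq_sum_qBinom, two_mul]
  refine SModEq.add ((SModEq.sum fun j hj => hq _ _ _ ?_).trans ?_)
    ((SModEq.sum fun j hj => hq _ _ _ ?_).trans ?_)
  · have := le_choose_two_succ j
    rw [mem_range] at hj
    omega
  · rw [← sum_mul]
    exact hΘ _ (by omega)
  · have := le_choose_two_succ j
    rw [mem_range] at hj
    omega
  · rw [← sum_mul]
    exact hΘ _ le_rfl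

theorem sq_distinctsSeries_int :
    distinctsSeries ℤ ^ 2 = triangularSeries ℤ * partitionSeries ℤ := by
  ext d
  have h := congrArg (coeff d) (eq_of_forall_smodEq_span_X_pow two_mul_sq_distinctsSeries_smodEq)
  rw [← map_ofNat C 2, coeff_C_mul, coeff_C_mul] at h
  exact mul_left_cancel₀ two_ne_zero h

theorem map_mk_natCast {R S : Type*} [CommRing R] [CommRing S] (φ : R →+* S) (f : ℕ → ℕ) :
    map φ (mk fun n => (f n : R)) = mk fun n => (f n : S) := by
  ext n
  simp

theorem sq_distinctsSeries (R : Type*) [CommRing R] :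
    distinctsSeries R ^ 2 = triangularSeries R * partitionSeries R := by
  simpa [distinctsSeries, triangularSeries, partitionSeries, map_mk_natCast] using
    congrArg (map (Int.castRingHom R)) sq_distinctsSeries_int

end GaussIdentity

section ModTwo

theorem two_eq_zero_zmod_two : (2 : (ZMod 2)⟦X⟧) = 0 := by
  rw [← map_ofNat C 2, show (OfNat.ofNat 2 : ZMod 2) = 0 from rfl, map_zero]

theorem regularSeries_four_eq_distinctsSeries_pow_three :
    regularSeries (ZMod 2) 4 = distinctsSeries (ZMod 2) ^ 3 := by
  have e : ∀ i, ∑ j ∈ range 4, (X : (ZMod 2)⟦X⟧) ^ ((i + 1) * j) = (1 + X ^ (i + 1)) ^ 3 := by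
    intro i
    simp only [sum_range_succ, range_zero, sum_empty, pow_mul]
    linear_combination (-(X : (ZMod 2)⟦X⟧) ^ (i + 1) - (X ^ (i + 1)) ^ 2) * two_eq_zero_zmod_two
  exact (hasProd_regularSeries _ four_pos).unique (funext e ▸ (hasProd_distinctsSeries _).pow 3)

theorem partitionSeries_mul_distinctsSeries_zmod_two :
    partitionSeries (ZMod 2) * distinctsSeries (ZMod 2) = 1 := by
  have h : ∏' i, (1 - X ^ (i + 1) : (ZMod 2)⟦X⟧) = distinctsSeries (ZMod 2) := by
    rw [← (hasProd_distinctsSeries _).tprod_eq]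
    exact tprod_congr fun i => by
      linear_combination (-(X : (ZMod 2)⟦X⟧) ^ (i + 1)) * two_eq_zero_zmod_two
  rw [← h, partitionSeries_mul_tprod_one_sub_X_pow]

theorem regularSeries_four_zmod_two :
    regularSeries (ZMod 2) 4 = triangularSeries (ZMod 2) := by
  rw [regularSeries_four_eq_distinctsSeries_pow_three, pow_succ, sq_distinctsSeries, mul_assoc,
    partitionSeries_mul_distinctsSeries_zmod_two, mul_one]

theorem numRegularPartitions_four_zmod_two (n : ℕ) :
    (numRegularPartitions 4 n : ZMod 2) = (triangularNumbers.indicator 1 n : ℕ) := by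
  simpa [regularSeries, triangularSeries] using congrArg (coeff n) regularSeries_four_zmod_two

end ModTwo

section ModFour

/-- Writing `f = t - 2 g`, the two cross terms of the convolution agree after swapping the
factors, so together they are divisible by `4`. -/
theorem sum_antidiagonal_mul_modEq_four {f t : ℕ → ℤ} (h : ∀ a, f a ≡ t a [ZMOD 2]) (N : ℕ) :
    ∑ p ∈ antidiagonal N, f p.1 * f p.2 ≡ ∑ p ∈ antidiagonal N, t p.1 * t p.2 [ZMOD 4] := by
  choose g hg using fun a => Int.modEq_iff_dvd.1 (h a)
  have hf : ∀ a, f a = t a - 2 * g a := fun a => by linarith [hg a]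
  have hswap : ∑ p ∈ antidiagonal N, g p.1 * t p.2 = ∑ p ∈ antidiagonal N, t p.1 * g p.2 := by
    rw [← Nat.sum_antidiagonal_swap]
    exact sum_congr rfl fun p _ => mul_comm _ _
  have hterm : ∀ p ∈ antidiagonal N, t p.1 * t p.2 - f p.1 * f p.2 =
      2 * (g p.1 * t p.2) + 2 * (t p.1 * g p.2) - 4 * (g p.1 * g p.2) := fun p _ => by
    rw [hf, hf]
    ring
  rw [Int.modEq_iff_dvd, ← sum_sub_distrib, sum_congr rfl hterm, sum_sub_distrib,
    sum_add_distrib, ← mul_sum, ← mul_sum, ← mul_sum, hswap]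
  exact ⟨∑ p ∈ antidiagonal N, t p.1 * g p.2 - ∑ p ∈ antidiagonal N, g p.1 * g p.2, by ring⟩

theorem B_four_modEq (N : ℕ) :
    (B 4 N : ℤ) ≡ ∑ p ∈ antidiagonal N,
      ((triangularNumbers.indicator 1 p.1 : ℕ) : ℤ) * (triangularNumbers.indicator 1 p.2 : ℕ)
      [ZMOD 4] := by
  rw [B]
  push_cast
  refine sum_antidiagonal_mul_modEq_four (f := fun a => (numRegularPartitions 4 a : ℤ))
    (t := fun a => ((triangularNumbers.indicator 1 a : ℕ) : ℤ)) (fun a => ?_) N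
  exact (ZMod.intCast_eq_intCast_iff _ _ 2).1
    (by exact_mod_cast numRegularPartitions_four_zmod_two a)

theorem B_four_mod_four_eq_zero {N : ℕ}
    (h : ∀ p ∈ antidiagonal N, ¬(p.1 ∈ triangularNumbers ∧ p.2 ∈ triangularNumbers)) :
    B 4 N % 4 = 0 := by
  have hB := B_four_modEq N
  rw [sum_eq_zero fun p hp => ?_] at hB
  · unfold Int.ModEq at hB
    omega
  · by_cases h1 : p.1 ∈ triangularNumbers
    · rw [Set.indicator_of_notMem fun h2 => h p hp ⟨h1, h2⟩]
      simp
    · rw [Set.indicator_of_notMem h1]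
      simp

end ModFour

section SumsOfTwoSquares

theorem four_mul_add_one_eq_sq_add_sq {a b : ℕ} (ha : a ∈ triangularNumbers)
    (hb : b ∈ triangularNumbers) : ∃ x y, 4 * (a + b) + 1 = x ^ 2 + y ^ 2 := by
  obtain ⟨i, rfl⟩ := ha
  obtain ⟨j, rfl⟩ := hb
  wlog hij : j ≤ i generalizing i j
  · obtain ⟨x, y, h⟩ := this j i (by omega)
    exact ⟨x, y, by rw [← h]; ring⟩
  obtain ⟨r, rfl⟩ := Nat.exists_eq_add_of_le hij
  refine ⟨2 * j + r + 1, r, ?_⟩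
  qify
  simp only [Nat.cast_choose_two]
  push_cast
  ring

theorem not_exists_sq_add_sq_of_odd_padicValNat {q m : ℕ} (hq : q.Prime) (hq3 : q % 4 = 3)
    (h : Odd (padicValNat q m)) : ¬∃ x y, m = x ^ 2 + y ^ 2 := by
  have hm : m ≠ 0 := by
    rintro rfl
    simp at h
  have hqm : q ∣ m := by
    by_contra hd
    rw [padicValNat.eq_zero_of_not_dvd hd] at h
    exact Nat.not_odd_zero h
  rw [Nat.eq_sq_add_sq_iff]
  exact fun H => Nat.not_even_iff_odd.2 h (H q (Nat.mem_primeFactors.2 ⟨hq, hqm, hm⟩) hq3)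

theorem odd_padicValNat_sq_mul_self_mul {q s c : ℕ} (hq : q.Prime) (hs : s ≠ 0)
    (hc : ¬q ∣ c) : Odd (padicValNat q (s ^ 2 * q * c)) := by
  have := Fact.mk hq
  have hc0 : c ≠ 0 := by
    rintro rfl
    exact hc (dvd_zero q)
  rw [padicValNat.mul (mul_ne_zero (pow_ne_zero 2 hs) hq.ne_zero) hc0,
    padicValNat.mul (pow_ne_zero 2 hs) hq.ne_zero, padicValNat.pow s 2,
    padicValNat.self hq.one_lt, padicValNat.eq_zero_of_not_dvd hc]
  exact ⟨padicValNat q s, by ring⟩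

end SumsOfTwoSquares

theorem exists_four_mul_add_one_eq {P s n t : ℕ} {j : ℤ} (hP : P.Prime) (hP3 : P % 4 = 3)
    (hj : ¬(P : ℤ) ∣ j) (ht : (4 * t : ℤ) = s ^ 2 * P * (4 * j + P) - 1) :
    ∃ c : ℕ, 4 * (s ^ 2 * P ^ 2 * n + t) + 1 = s ^ 2 * P * c ∧ ¬P ∣ c := by
  have hpos : 0 < 4 * j + P :=
    pos_of_mul_pos_right (by linarith [Int.natCast_nonneg t] : (0 : ℤ) < s ^ 2 * P * (4 * j + P))
      (by positivity)
  have hnonneg : 0 ≤ 4 * P * n + 4 * j + P := by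
    have : (0 : ℤ) ≤ 4 * P * n := by positivity
    linarith
  obtain ⟨c, hc⟩ : ∃ c : ℕ, (c : ℤ) = 4 * P * n + 4 * j + P := ⟨_, Int.toNat_of_nonneg hnonneg⟩
  refine ⟨c, ?_, fun hPc => ?_⟩
  · zify
    rw [hc]
    linear_combination ht
  · have h4j : (P : ℤ) ∣ 4 * j := by
      have := (Int.natCast_dvd_natCast.2 hPc).sub (dvd_mul_right (P : ℤ) (4 * n + 1))
      rwa [hc, show 4 * P * n + 4 * j + P - P * (4 * n + 1) = 4 * j by ring] at this
    rcases (Nat.prime_iff_prime_int.mp hP).dvd_or_dvd h4j with h4 | h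
    · have : P ≤ 4 := Nat.le_of_dvd (by norm_num) (by exact_mod_cast h4)
      obtain rfl : P = 3 := by omega
      norm_num at h4
    · exact hj h

theorem stmt9_general (k : ℕ) (n : ℕ) (p : Fin (k + 1) → ℕ)
    (hp : ∀ i, (p i).Prime) (hp3 : ∀ i, p i % 4 = 3)
    (j : ℤ) (hj : ¬ ((p (Fin.last k) : ℤ) ∣ j)) :
    ∀ t : ℕ,
      (4 * t : ℤ) =
        (∏ i : Fin k, (p i.castSucc : ℤ) ^ 2) * (p (Fin.last k) : ℤ) *
          (4 * j + (p (Fin.last k) : ℤ)) - 1 →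
      B 4 ((∏ i : Fin k, (p i.castSucc) ^ 2) * (p (Fin.last k)) ^ 2 * n + t) % 4 = 0 := by
  intro t ht
  have hs : ∏ i : Fin k, p i.castSucc ≠ 0 := prod_ne_zero_iff.2 fun i _ => (hp _).ne_zero
  rw [prod_pow] at ht ⊢
  obtain ⟨c, hc, hPc⟩ := exists_four_mul_add_one_eq (n := n) (hp (Fin.last k)) (hp3 _) hj
    (by exact_mod_cast ht)
  refine B_four_mod_four_eq_zero fun q hq ⟨ha, hb⟩ => ?_
  obtain ⟨x, y, hxy⟩ := four_mul_add_one_eq_sq_add_sq ha hb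
  rw [HasAntidiagonal.mem_antidiagonal.1 hq, hc] at hxy
  exact not_exists_sq_add_sq_of_odd_padicValNat (hp _) (hp3 _)
    (odd_padicValNat_sq_mul_self_mul (hp _) hs hPc) ⟨x, y, hxy⟩

/-- Let `p 0, ..., p k` be primes, each congruent to `3 (mod 4)`, and let `j` be an
integer not divisible by the last prime.  If `t` is the natural number with
`4 t = (p 0)^2 ... (p (k-1))^2 * (p k) * (4 j + p k) - 1`, then
`B 4 ((p 0)^2 ... (p k)^2 * n + t) = 0 (mod 4)` for every `n >= 1`. -/
theorem stmt9 (k : ℕ) (n : ℕ) (hn : 0 < n) (p : Fin (k + 1) → ℕ)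
    (hp : ∀ i, (p i).Prime) (hp3 : ∀ i, p i % 4 = 3)
    (j : ℤ) (hj : ¬ ((p (Fin.last k) : ℤ) ∣ j)) :
    ∀ t : ℕ,
      (4 * t : ℤ) =
        (∏ i : Fin k, (p i.castSucc : ℤ) ^ 2) * (p (Fin.last k) : ℤ) *
          (4 * j + (p (Fin.last k) : ℤ)) - 1 →
      B 4 ((∏ i : Fin k, (p i.castSucc) ^ 2) * (p (Fin.last k)) ^ 2 * n + t) % 4 = 0 :=
  stmt9_general k n p hp hp3 j hj
end

section
/- If d(m) denotes the m-th Fourier coefficient of η(4z)⁶ = q∏_{n≥1}(1−q^{4n})⁶ = ∑_{m≥1} d(m) q^m, then for every non-negative integer n one has B₄(n) ≡ d(4n + 1) (mod 4). -/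
/-- `etaCoeff k e m` is the `m`-th Fourier coefficient of the eta-quotient expansion
`q ∏_{i ≥ 1} (1 - q^(k i))^e`.  Truncating the infinite product at `i = m` does not
change the coefficients of `q^j` for `j ≤ m`, so this is a faithful definition. -/
noncomputable def etaCoeff (k e m : ℕ) : ℤ :=
  PowerSeries.coeff (R := ℤ) m
    (PowerSeries.X * ∏ i ∈ Finset.Icc 1 m, (1 - PowerSeries.X ^ (k * i)) ^ e)

/-!
The generating function of `4`-regular partitions is `∏ (1 + q^i + q^{2i} + q^{3i})`, and modulo
`4` each factor satisfies `(1 + y + y² + y³)² ≡ (1 - y)⁶`. Hence `∑ B₄(n) qⁿ`, the square of that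
generating function, is `∏ (1 - qⁱ)⁶` modulo `4`, whose `n`-th coefficient is the `(4n+1)`-st
coefficient of `q ∏ (1 - q^{4i})⁶`.
-/

open PowerSeries Finset
open scoped PowerSeries.WithPiTopology

section TruncatedProducts

variable {ι R : Type*} [CommRing R]

theorem dvd_prod_sub_one {a : R} {s : Finset ι} {f : ι → R} (h : ∀ i ∈ s, a ∣ f i - 1) :
    a ∣ ∏ i ∈ s, f i - 1 :=
  prod_induction f (fun x ↦ a ∣ x - 1)
    (fun x y hx hy ↦ by
      rw [show x * y - 1 = (x - 1) * y + (y - 1) by ring]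
      exact dvd_add (dvd_mul_of_dvd_left hx y) hy)
    (by simp) h

theorem dvd_one_sub_pow_sub_one (a : R) (e : ℕ) : a ∣ (1 - a) ^ e - 1 := by
  simpa using sub_dvd_pow_sub_pow (1 - a) 1 e

theorem coeff_prod_eq_of_subset [DecidableEq ι] {f : ι → R⟦X⟧} {s t : Finset ι} {d : ℕ}
    (hst : s ⊆ t) (h : ∀ i ∈ t \ s, X ^ (d + 1) ∣ f i - 1) :
    coeff d (∏ i ∈ t, f i) = coeff d (∏ i ∈ s, f i) := by
  have hdvd : X ^ (d + 1) ∣ ∏ i ∈ t, f i - ∏ i ∈ s, f i := by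
    rw [← prod_sdiff hst, ← sub_one_mul]
    exact dvd_mul_of_dvd_left (dvd_prod_sub_one h) _
  simpa [sub_eq_zero] using X_pow_dvd_iff.mp hdvd d (Nat.lt_succ_self d)

theorem HasProd.coeff_eq_coeff_prod [TopologicalSpace R] [T2Space R] {f : ι → R⟦X⟧} {L : R⟦X⟧}
    (hL : HasProd f L) {s : Finset ι} {d : ℕ} (h : ∀ i ∉ s, X ^ (d + 1) ∣ f i - 1) :
    coeff d L = coeff d (∏ i ∈ s, f i) := by
  classical
  have hlim : Filter.Tendsto (fun t ↦ coeff d (∏ i ∈ t, f i)) Filter.atTop (nhds (coeff d L)) :=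
    ((WithPiTopology.continuous_coeff R d).tendsto L).comp hL
  have hconst : (fun _ ↦ coeff d (∏ i ∈ s, f i)) =ᶠ[Filter.atTop]
      fun t ↦ coeff d (∏ i ∈ t, f i) :=
    Filter.eventually_atTop.2 ⟨s, fun t hst ↦
      (coeff_prod_eq_of_subset hst fun i hi ↦ h i (mem_sdiff.1 hi).2).symm⟩
  exact tendsto_nhds_unique hlim (tendsto_const_nhds.congr' hconst)

end TruncatedProducts

theorem prod_Icc_one_eq_prod_range {M : Type*} [CommMonoid M] (f : ℕ → M) (m : ℕ) :
    ∏ i ∈ Icc 1 m, f i = ∏ i ∈ range m, f (i + 1) := by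
  rw [range_eq_Ico, prod_Ico_add' f 0 m 1, zero_add, Ico_add_one_right_eq_Icc]

theorem geom_sum_four_sq_eq_one_sub_pow_six {R : Type*} [CommRing R] (h4 : (4 : R) = 0)
    (y : R) : (∑ j ∈ range 4, y ^ j) ^ 2 = (1 - y) ^ 6 := by
  simp only [sum_range_succ, sum_range_zero]
  linear_combination (2 * y - 3 * y ^ 2 + 6 * y ^ 3 - 3 * y ^ 4 + 2 * y ^ 5) * h4

theorem hasProd_numRegularPartitions (R : Type*) [CommSemiring R] [TopologicalSpace R]
    [T2Space R] [IsTopologicalSemiring R] {l : ℕ} (hl : 0 < l) :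
    HasProd (fun i ↦ ∑ j ∈ range l, (X : R⟦X⟧) ^ ((i + 1) * j))
      (mk fun n ↦ (numRegularPartitions l n : R)) := by
  convert Nat.Partition.hasProd_powerSeriesMk_card_countRestricted R hl using 3
  exact congrArg Nat.cast (Nat.Partition.card_restricted_eq_card_countRestricted _ hl)

theorem natCast_B_eq_coeff_sq {R : Type*} [CommSemiring R] (l n : ℕ) :
    (B l n : R) = coeff n ((mk fun k ↦ (numRegularPartitions l k : R)) ^ 2) := by
  simp [B, sq, coeff_mul]

theorem hasProd_sq_numRegularPartitions_four :
    HasProd (fun i ↦ (1 - X ^ (i + 1) : (ZMod 4)⟦X⟧) ^ 6)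
      ((mk fun n ↦ (numRegularPartitions 4 n : ZMod 4)) ^ 2) := by
  have h4 : (4 : (ZMod 4)⟦X⟧) = 0 := by
    rw [← map_ofNat C, show (OfNat.ofNat 4 : ZMod 4) = 0 by decide, map_zero]
  refine ((hasProd_numRegularPartitions (ZMod 4) four_pos).pow 2).congr_fun fun i ↦ ?_
  simp_rw [pow_mul]
  exact (geom_sum_four_sq_eq_one_sub_pow_six h4 _).symm

theorem coeff_mul_prod_one_sub_X_pow_mul {ι R : Type*} [CommRing R] {k : ℕ} (hk : k ≠ 0)
    (s : Finset ι) (a : ι → ℕ) (e n : ℕ) :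
    coeff (k * n) (∏ i ∈ s, (1 - X ^ (k * a i) : R⟦X⟧) ^ e) =
      coeff n (∏ i ∈ s, (1 - X ^ a i : R⟦X⟧) ^ e) := by
  conv_rhs => rw [← coeff_expand_mul k hk]
  simp [map_prod, pow_mul]

theorem intCast_etaCoeff_succ {R : Type*} [CommRing R] (k e m : ℕ) :
    (etaCoeff k e (m + 1) : R) =
      coeff m (∏ i ∈ range (m + 1), (1 - X ^ (k * (i + 1)) : R⟦X⟧) ^ e) := by
  rw [etaCoeff, ← eq_intCast (Int.castRingHom R), ← coeff_map, map_mul, map_X, coeff_succ_X_mul,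
    prod_Icc_one_eq_prod_range (fun i ↦ (1 - X ^ (k * i) : ℤ⟦X⟧) ^ e)]
  simp [map_prod]

/-- Let `d m = etaCoeff 4 6 m` be the `m`-th Fourier coefficient of
`eta(4z)^6 = q prod_{i >= 1} (1 - q^(4 i))^6`.  Then `B 4 n = d (4 n + 1) (mod 4)`
for every `n >= 0`. -/
theorem stmt19 (n : ℕ) :
    (B 4 n : ℤ) ≡ etaCoeff 4 6 (4 * n + 1) [ZMOD 4] := by
  refine (ZMod.intCast_eq_intCast_iff _ _ 4).1 ?_
  rw [Int.cast_natCast, natCast_B_eq_coeff_sq, intCast_etaCoeff_succ,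
    coeff_mul_prod_one_sub_X_pow_mul four_ne_zero]
  refine hasProd_sq_numRegularPartitions_four.coeff_eq_coeff_prod fun i hi ↦ ?_
  have hni : n + 1 ≤ i + 1 := by rw [mem_range] at hi; omega
  exact (pow_dvd_pow X hni).trans (dvd_one_sub_pow_sub_one _ 6)
end
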